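/- arXiv:math/9808134 — 3 statements merged into one kernel-verified Lean document; each statement's English description precedes it below -/
import Mathlib

section
/- Let (M, d) be a complete metric space and let (lᵢ) be a sequence of pairwise commuting isometries of M (maps lᵢ : M → M with d(lᵢ a, lᵢ b) = d(a,b) for all a, b and lᵢ ∘ lⱼ = lⱼ ∘ lᵢ for all i, j). Suppose x, y ∈ M and lᵢ x → y as i → ∞. Then d(lᵢ y, lⱼ y) ≤ 3 d(y, lᵢ x) + 3 d(lⱼ x, y) for all i, j; consequently (lᵢ y) is a Cauchy sequence and converges in M. -/
open Filter

/-- Claim 3 in the proof of the Lemma in section 4: for pairwise commuting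
isometries `lᵢ` of a complete metric space, if `lᵢ x → y` then
`d(lᵢ y, lⱼ y) ≤ 3 d(y, lᵢ x) + 3 d(lⱼ x, y)`, so `(lᵢ y)` is Cauchy and converges. -/
theorem commuting_isometries_limit
    {M : Type*} [MetricSpace M] [CompleteSpace M]
    (l : ℕ → M → M)
    (hiso : ∀ i : ℕ, ∀ a b : M, dist (l i a) (l i b) = dist a b)
    (hcomm : ∀ i j : ℕ, ∀ z : M, l i (l j z) = l j (l i z))
    (x y : M)
    (hlim : Tendsto (fun i => l i x) atTop (nhds y)) :
    (∀ i j : ℕ, dist (l i y) (l j y) ≤ 3 * dist y (l i x) + 3 * dist (l j x) y) ∧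
    CauchySeq (fun i => l i y) ∧
    ∃ z : M, Tendsto (fun i => l i y) atTop (nhds z) := by
  have key : ∀ i j : ℕ, dist (l i y) (l j y) ≤ 3 * dist y (l i x) + 3 * dist (l j x) y := by
    intro i j
    have h1 : dist (l i y) (l j y) ≤ dist (l i y) (l i (l i x)) + dist (l i (l i x)) (l i (l j x))
        + dist (l i (l j x)) (l j (l j x)) + dist (l j (l j x)) (l j y) := by
      calc dist (l i y) (l j y) ≤ dist (l i y) (l i (l j x)) + dist (l i (l j x)) (l j (l j x))
              + dist (l j (l j x)) (l j y) := dist_triangle4 _ _ _ _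
        _ ≤ _ := by
              have := dist_triangle (l i y) (l i (l i x)) (l i (l j x))
              linarith
    rw [hiso i y (l i x), hiso i (l i x) (l j x), hiso j (l j x) y, hcomm i j x] at h1
    rw [hiso j (l i x) (l j x)] at h1
    have h2 : dist (l i x) (l j x) ≤ dist (l i x) y + dist y (l j x) := dist_triangle _ _ _
    rw [dist_comm (l i x) y, dist_comm y (l j x)] at h2
    linarith
  have hc : CauchySeq (fun i => l i y) := by
    rw [Metric.cauchySeq_iff]
    intro ε hε
    rw [Metric.tendsto_atTop] at hlim
    obtain ⟨N, hN⟩ := hlim (ε / 6) (by linarith)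
    refine ⟨N, fun m hm n hn => ?_⟩
    have h1 := hN m hm
    have h2 := hN n hn
    have h3 := key m n
    rw [dist_comm y (l m x)] at h3
    linarith
  exact ⟨key, hc, cauchySeq_tendsto_of_complete hc⟩
end

section
/- Let Ω ⊂ ℝ³ be open with coordinates (x, p, q), and let F : Ω → ℝ be smooth with ∂²F/∂x² > 0 on Ω. Let V ⊂ ℝ³ be open with coordinates (s, p, q) and let ξ : V → ℝ be a smooth function such that (ξ(s,p,q), p, q) ∈ Ω and (∂F/∂x)(ξ(s,p,q), p, q) = 4s for all (s,p,q) ∈ V. Define K(s,p,q) = F(ξ(s,p,q), p, q) − 4s·ξ(s,p,q). Then at every point of V one has the identity K_{ss}(K_{pp} + K_{qq}) − (K_{sp})² − (K_{sq})² = −16 (F_{pp} + F_{qq})/F_{xx}, evaluated at (ξ(s,p,q),p,q); in particular, the Monge–Ampère equation K_{ss}(K_{pp} + K_{qq}) − (K_{sp})² − (K_{sq})² = 16 holds at (s,p,q) if and only if F is harmonic at (ξ(s,p,q),p,q), i.e. F_{xx} + F_{pp} + F_{qq} = 0 there. -/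
open scoped BigOperators

/-- First partial derivative of `f : ℝ³ → ℝ` in the `i`-th coordinate direction. -/
noncomputable def pd3 (i : Fin 3) (f : EuclideanSpace ℝ (Fin 3) → ℝ)
    (x : EuclideanSpace ℝ (Fin 3)) : ℝ :=
  fderiv ℝ f x (EuclideanSpace.single i 1)

/-- Second partial derivative `∂²f/∂xᵢ∂xⱼ`. -/
noncomputable def pd3' (i j : Fin 3) (f : EuclideanSpace ℝ (Fin 3) → ℝ)
    (x : EuclideanSpace ℝ (Fin 3)) : ℝ :=
  pd3 i (pd3 j f) x

local notation "E3" => EuclideanSpace ℝ (Fin 3)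

noncomputable def sgl (i : Fin 3) : EuclideanSpace ℝ (Fin 3) := EuclideanSpace.single i 1

lemma sgl_apply (i j : Fin 3) : (sgl i) j = if j = i then 1 else 0 := by
  simp [sgl, EuclideanSpace.single_apply]

lemma contDiffAt_pd3 {f : EuclideanSpace ℝ (Fin 3) → ℝ} {x : E3} (i : Fin 3)
    (hf : ContDiffAt ℝ (⊤ : ℕ∞) f x) :
    ContDiffAt ℝ ((⊤:ℕ∞) : WithTop ℕ∞) (pd3 i f) x := by
  have h1 : ContDiffAt ℝ ((⊤:ℕ∞) : WithTop ℕ∞) (fderiv ℝ f) x :=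
    hf.fderiv_right (by simp)
  exact (ContinuousLinearMap.apply ℝ ℝ (sgl i)).contDiff.contDiffAt.comp x h1

lemma pd3'_eq {f : EuclideanSpace ℝ (Fin 3) → ℝ} {x : E3} (i j : Fin 3)
    (hf : ContDiffAt ℝ (⊤ : ℕ∞) f x) :
    pd3' i j f x = fderiv ℝ (fderiv ℝ f) x (sgl i) (sgl j) := by
  have h1 : ContDiffAt ℝ ((1:ℕ∞) : WithTop ℕ∞) (fderiv ℝ f) x :=
    hf.fderiv_right (by exact_mod_cast le_top)
  have h2 : DifferentiableAt ℝ (fderiv ℝ f) x := h1.differentiableAt (by simp)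
  have h3 : HasFDerivAt (fun y => (ContinuousLinearMap.apply ℝ ℝ (sgl j)) (fderiv ℝ f y))
      ((ContinuousLinearMap.apply ℝ ℝ (sgl j)).comp (fderiv ℝ (fderiv ℝ f) x)) x :=
    (ContinuousLinearMap.apply ℝ ℝ (sgl j)).hasFDerivAt.comp x h2.hasFDerivAt
  have h4 : pd3 j f = fun y => (ContinuousLinearMap.apply ℝ ℝ (sgl j)) (fderiv ℝ f y) := rfl
  rw [pd3', pd3, h4, h3.fderiv]
  rfl

lemma pd3'_symm {f : EuclideanSpace ℝ (Fin 3) → ℝ} {x : E3} (i j : Fin 3)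
    (hf : ContDiffAt ℝ (⊤ : ℕ∞) f x) :
    pd3' i j f x = pd3' j i f x := by
  rw [pd3'_eq i j hf, pd3'_eq j i hf]
  exact (hf.isSymmSndFDerivAt (by rw [minSmoothness_of_isRCLikeNormedField]; exact WithTop.coe_le_coe.mpr (le_top : (2:ℕ∞) ≤ ⊤))) _ _

lemma pd3_congr {V : Set E3} (hV : IsOpen V) {v : E3} (hv : v ∈ V)
    {f g : E3 → ℝ} (h : ∀ w ∈ V, f w = g w) (i : Fin 3) :
    pd3 i f v = pd3 i g v := by
  unfold pd3
  rw [Filter.EventuallyEq.fderiv_eq (Filter.eventuallyEq_of_mem (hV.mem_nhds hv) h)]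

lemma pt_eq (ξ : E3 → ℝ) (pt : E3 → E3)
    (hpt : ∀ v, pt v 0 = ξ v ∧ pt v 1 = v 1 ∧ pt v 2 = v 2) :
    pt = fun w => ξ w • sgl 0 + w 1 • sgl 1 + w 2 • sgl 2 := by
  funext w
  have h := hpt w
  ext j
  fin_cases j <;>
    simp [PiLp.add_apply, PiLp.smul_apply, sgl_apply, h.1, h.2.1, h.2.2]

lemma hasFDerivAt_pt (ξ : E3 → ℝ) (pt : E3 → E3)
    (hpt : ∀ v, pt v 0 = ξ v ∧ pt v 1 = v 1 ∧ pt v 2 = v 2)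
    (v : E3) (hξ : DifferentiableAt ℝ ξ v) :
    HasFDerivAt pt ((fderiv ℝ ξ v).smulRight (sgl 0)
      + (EuclideanSpace.proj (1:Fin 3)).smulRight (sgl 1)
      + (EuclideanSpace.proj (2:Fin 3)).smulRight (sgl 2)) v := by
  rw [pt_eq ξ pt hpt]
  have hp1 : HasFDerivAt (fun w : E3 => w 1) (EuclideanSpace.proj (1:Fin 3) : E3 →L[ℝ] ℝ) v := by
    convert (EuclideanSpace.proj (1:Fin 3) : E3 →L[ℝ] ℝ).hasFDerivAt (x := v) using 1
    funext w; simp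
  have hp2 : HasFDerivAt (fun w : E3 => w 2) (EuclideanSpace.proj (2:Fin 3) : E3 →L[ℝ] ℝ) v := by
    convert (EuclideanSpace.proj (2:Fin 3) : E3 →L[ℝ] ℝ).hasFDerivAt (x := v) using 1
    funext w; simp
  exact ((hξ.hasFDerivAt.smul_const (sgl 0)).add
      (hp1.smul_const (sgl 1))).add
    (hp2.smul_const (sgl 2))

lemma chain3 (ξ : E3 → ℝ) (pt : E3 → E3)
    (hpt : ∀ v, pt v 0 = ξ v ∧ pt v 1 = v 1 ∧ pt v 2 = v 2)
    (g : E3 → ℝ) (v : E3) (hξ : DifferentiableAt ℝ ξ v)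
    (hg : DifferentiableAt ℝ g (pt v)) (i : Fin 3) :
    pd3 i (fun w => g (pt w)) v =
      pd3 i ξ v * pd3 0 g (pt v) + (sgl i 1) * pd3 1 g (pt v)
        + (sgl i 2) * pd3 2 g (pt v) := by
  have hL := hasFDerivAt_pt ξ pt hpt v hξ
  have hcomp : HasFDerivAt (fun w => g (pt w))
      ((fderiv ℝ g (pt v)).comp _) v := hg.hasFDerivAt.comp v hL
  rw [pd3, hcomp.fderiv]
  simp only [pd3, sgl, ContinuousLinearMap.comp_apply, ContinuousLinearMap.add_apply,
    ContinuousLinearMap.smulRight_apply, PiLp.proj_apply, map_add, map_smul,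
    smul_eq_mul]

/-- The Legendre transform identity (n = 1 case of Proposition 4): for
`K(s,p,q) = F(ξ(s,p,q),p,q) − 4sξ(s,p,q)` with `F_x(ξ(s,p,q),p,q) = 4s`, one has
`K_{ss}(K_{pp}+K_{qq}) − K_{sp}² − K_{sq}² = −16(F_{pp}+F_{qq})/F_{xx}`, so the
Monge–Ampère equation `= 16` holds iff `F` is harmonic at the corresponding point. -/
theorem legendre_monge_ampere
    (Ω : Set (EuclideanSpace ℝ (Fin 3))) (hΩ : IsOpen Ω)
    (F : EuclideanSpace ℝ (Fin 3) → ℝ) (hF : ContDiffOn ℝ (⊤ : ℕ∞) F Ω)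
    (hFxx : ∀ x ∈ Ω, 0 < pd3' 0 0 F x)
    (V : Set (EuclideanSpace ℝ (Fin 3))) (hV : IsOpen V)
    (ξ : EuclideanSpace ℝ (Fin 3) → ℝ) (hξ : ContDiffOn ℝ (⊤ : ℕ∞) ξ V)
    (pt : EuclideanSpace ℝ (Fin 3) → EuclideanSpace ℝ (Fin 3))
    (hpt : ∀ v, pt v 0 = ξ v ∧ pt v 1 = v 1 ∧ pt v 2 = v 2)
    (hmem : ∀ v ∈ V, pt v ∈ Ω)
    (hleg : ∀ v ∈ V, pd3 0 F (pt v) = 4 * v 0)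
    (K : EuclideanSpace ℝ (Fin 3) → ℝ)
    (hK : ∀ v ∈ V, K v = F (pt v) - 4 * v 0 * ξ v) :
    ∀ v ∈ V,
      (pd3' 0 0 K v * (pd3' 1 1 K v + pd3' 2 2 K v)
          - (pd3' 0 1 K v) ^ 2 - (pd3' 0 2 K v) ^ 2
        = -16 * (pd3' 1 1 F (pt v) + pd3' 2 2 F (pt v)) / pd3' 0 0 F (pt v)) ∧
      (pd3' 0 0 K v * (pd3' 1 1 K v + pd3' 2 2 K v)
          - (pd3' 0 1 K v) ^ 2 - (pd3' 0 2 K v) ^ 2 = 16 ↔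
        pd3' 0 0 F (pt v) + pd3' 1 1 F (pt v) + pd3' 2 2 F (pt v) = 0) := by
  have hξat : ∀ w ∈ V, ContDiffAt ℝ (⊤ : ℕ∞) ξ w := fun w hw => hξ.contDiffAt (hV.mem_nhds hw)
  have hFat : ∀ w ∈ V, ContDiffAt ℝ (⊤ : ℕ∞) F (pt w) :=
    fun w hw => hF.contDiffAt (hΩ.mem_nhds (hmem w hw))
  have dξ : ∀ w ∈ V, DifferentiableAt ℝ ξ w :=
    fun w hw => (hξat w hw).differentiableAt (by simp)
  have dptF : ∀ (m : Fin 3), ∀ w ∈ V, DifferentiableAt ℝ (pd3 m F) (pt w) := fun m w hw =>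
    (contDiffAt_pd3 m (hFat w hw)).differentiableAt (by simp)
  have dpt : ∀ w ∈ V, DifferentiableAt ℝ pt w :=
    fun w hw => (hasFDerivAt_pt ξ pt hpt w (dξ w hw)).differentiableAt
  have dcomp : ∀ (m : Fin 3), ∀ w ∈ V, DifferentiableAt ℝ (fun u => pd3 m F (pt u)) w :=
    fun m w hw => (dptF m w hw).comp w (dpt w hw)
  -- first derivatives of K on V
  have KD : ∀ (i : Fin 3), ∀ w ∈ V, pd3 i K w =
      sgl i 1 * pd3 1 F (pt w) + sgl i 2 * pd3 2 F (pt w) - 4 * sgl i 0 * ξ w := by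
    intro i w hw
    have e0 : pd3 i K w = pd3 i (fun u => F (pt u) - 4 * u 0 * ξ u) w :=
      pd3_congr hV hw hK i
    have dFpt : DifferentiableAt ℝ (fun u => F (pt u)) w :=
      ((hFat w hw).differentiableAt (by simp)).comp w (dpt w hw)
    have hprod : HasFDerivAt (fun u : E3 => 4 * u 0 * ξ u)
        ((4 * w 0) • fderiv ℝ ξ w + ξ w • ((4:ℝ) • (EuclideanSpace.proj (0:Fin 3)))) w :=
      (((EuclideanSpace.proj (0:Fin 3)).hasFDerivAt.const_mul (4:ℝ)).mul
        (dξ w hw).hasFDerivAt)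
    have hsub : HasFDerivAt (fun u : E3 => F (pt u) - 4 * u 0 * ξ u)
        (fderiv ℝ (fun u => F (pt u)) w - _) w := dFpt.hasFDerivAt.sub hprod
    rw [e0, pd3, hsub.fderiv]
    have e1 : fderiv ℝ (fun u => F (pt u)) w (EuclideanSpace.single i 1)
        = pd3 i (fun u => F (pt u)) w := rfl
    simp only [ContinuousLinearMap.sub_apply, ContinuousLinearMap.add_apply,
      ContinuousLinearMap.smul_apply, PiLp.proj_apply, smul_eq_mul, e1]
    rw [chain3 ξ pt hpt F w (dξ w hw) ((hFat w hw).differentiableAt (by simp)) i,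
      hleg w hw]
    have : (EuclideanSpace.single i 1 : E3) 0 = sgl i 0 := rfl
    rw [this]
    show _ = _
    have e2 : fderiv ℝ ξ w (EuclideanSpace.single i 1) = pd3 i ξ w := rfl
    rw [e2]; ring
  intro v hv
  -- second derivatives of K
  have KD2 : ∀ i j : Fin 3, pd3' i j K v =
      sgl j 1 * (pd3 i ξ v * pd3' 0 1 F (pt v) + sgl i 1 * pd3' 1 1 F (pt v)
        + sgl i 2 * pd3' 2 1 F (pt v))
      + sgl j 2 * (pd3 i ξ v * pd3' 0 2 F (pt v) + sgl i 1 * pd3' 1 2 F (pt v)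
        + sgl i 2 * pd3' 2 2 F (pt v))
      - 4 * sgl j 0 * pd3 i ξ v := by
    intro i j
    have e0 : pd3' i j K v = pd3 i
        (fun w => sgl j 1 * pd3 1 F (pt w) + sgl j 2 * pd3 2 F (pt w)
          - 4 * sgl j 0 * ξ w) v :=
      pd3_congr hV hv (fun w hw => KD j w hw) i
    have h1 := (dcomp 1 v hv).hasFDerivAt.const_mul (sgl j 1)
    have h2 := (dcomp 2 v hv).hasFDerivAt.const_mul (sgl j 2)
    have h3 := (dξ v hv).hasFDerivAt.const_mul (4 * sgl j 0)
    have hall : HasFDerivAt (fun w => sgl j 1 * pd3 1 F (pt w) + sgl j 2 * pd3 2 F (pt w)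
          - 4 * sgl j 0 * ξ w) _ v := (h1.add h2).sub h3
    rw [e0, pd3, hall.fderiv]
    simp only [ContinuousLinearMap.sub_apply, ContinuousLinearMap.add_apply,
      ContinuousLinearMap.smul_apply, smul_eq_mul]
    have c1 := chain3 ξ pt hpt (pd3 1 F) v (dξ v hv) (dptF 1 v hv) i
    have c2 := chain3 ξ pt hpt (pd3 2 F) v (dξ v hv) (dptF 2 v hv) i
    have e1 : fderiv ℝ (fun u => pd3 1 F (pt u)) v (EuclideanSpace.single i 1)
        = pd3 i (fun u => pd3 1 F (pt u)) v := rfl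
    have e2 : fderiv ℝ (fun u => pd3 2 F (pt u)) v (EuclideanSpace.single i 1)
        = pd3 i (fun u => pd3 2 F (pt u)) v := rfl
    have e3 : fderiv ℝ ξ v (EuclideanSpace.single i 1) = pd3 i ξ v := rfl
    rw [e1, e2, e3, c1, c2]
    rfl
  -- differentiated Legendre relation
  have legD : ∀ i : Fin 3, pd3 i ξ v * pd3' 0 0 F (pt v)
      + sgl i 1 * pd3' 1 0 F (pt v) + sgl i 2 * pd3' 2 0 F (pt v) = 4 * sgl i 0 := by
    intro i
    have e0 : pd3 i (fun w => pd3 0 F (pt w)) v = pd3 i (fun w : E3 => 4 * w 0) v :=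
      pd3_congr hV hv (fun w hw => hleg w hw) i
    have h2 : pd3 i (fun w : E3 => 4 * w 0) v = 4 * sgl i 0 := by
      have h : HasFDerivAt (fun w : E3 => 4 * w 0)
          ((4:ℝ) • (EuclideanSpace.proj (0:Fin 3) : E3 →L[ℝ] ℝ)) v :=
        ((EuclideanSpace.proj (0:Fin 3) : E3 →L[ℝ] ℝ).hasFDerivAt (x := v)).const_mul (4:ℝ)
      rw [pd3, h.fderiv]
      simp only [ContinuousLinearMap.smul_apply, PiLp.proj_apply, smul_eq_mul]
      rfl
    rw [chain3 ξ pt hpt (pd3 0 F) v (dξ v hv) (dptF 0 v hv) i] at e0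
    show pd3 i ξ v * pd3 0 (pd3 0 F) (pt v) + sgl i 1 * pd3 1 (pd3 0 F) (pt v)
        + sgl i 2 * pd3 2 (pd3 0 F) (pt v) = 4 * sgl i 0
    rw [e0, h2]
  -- numeric values of sgl
  have s00 : sgl (0:Fin 3) (0:Fin 3) = 1 := by simp [sgl_apply]
  have s01 : sgl (0:Fin 3) (1:Fin 3) = 0 := by simp [sgl_apply]
  have s02 : sgl (0:Fin 3) (2:Fin 3) = 0 := by simp [sgl_apply]
  have s10 : sgl (1:Fin 3) (0:Fin 3) = 0 := by simp [sgl_apply]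
  have s11 : sgl (1:Fin 3) (1:Fin 3) = 1 := by simp [sgl_apply]
  have s12 : sgl (1:Fin 3) (2:Fin 3) = 0 := by simp [sgl_apply]
  have s20 : sgl (2:Fin 3) (0:Fin 3) = 0 := by simp [sgl_apply]
  have s21 : sgl (2:Fin 3) (1:Fin 3) = 0 := by simp [sgl_apply]
  have s22 : sgl (2:Fin 3) (2:Fin 3) = 1 := by simp [sgl_apply]
  have h00 := KD2 0 0
  have h01 := KD2 0 1
  have h02 := KD2 0 2
  have h11 := KD2 1 1
  have h22 := KD2 2 2
  have l0 := legD 0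
  have l1 := legD 1
  have l2 := legD 2
  simp only [s00, s01, s02, s10, s11, s12, s20, s21, s22, zero_mul, mul_zero, one_mul,
    mul_one, add_zero, zero_add, zero_sub, sub_zero] at h00 h01 h02 h11 h22 l0 l1 l2
  have hA : 0 < pd3' 0 0 F (pt v) := hFxx (pt v) (hmem v hv)
  have hA0 : pd3' 0 0 F (pt v) ≠ 0 := ne_of_gt hA
  have symm1 : pd3' 1 0 F (pt v) = pd3' 0 1 F (pt v) := pd3'_symm 1 0 (hFat v hv)
  have symm2 : pd3' 2 0 F (pt v) = pd3' 0 2 F (pt v) := pd3'_symm 2 0 (hFat v hv)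
  have exs : pd3 0 ξ v = 4 / pd3' 0 0 F (pt v) := by
    rw [eq_div_iff hA0]; linarith [l0]
  have exp1 : pd3 1 ξ v = -pd3' 0 1 F (pt v) / pd3' 0 0 F (pt v) := by
    rw [eq_div_iff hA0]; linarith [l1, symm1]
  have exq1 : pd3 2 ξ v = -pd3' 0 2 F (pt v) / pd3' 0 0 F (pt v) := by
    rw [eq_div_iff hA0]; linarith [l2, symm2]
  have key : pd3' 0 0 K v * (pd3' 1 1 K v + pd3' 2 2 K v)
      - (pd3' 0 1 K v) ^ 2 - (pd3' 0 2 K v) ^ 2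
      = -16 * (pd3' 1 1 F (pt v) + pd3' 2 2 F (pt v)) / pd3' 0 0 F (pt v) := by
    rw [h00, h01, h02, h11, h22, exs, exp1, exq1]
    field_simp
    ring
  refine ⟨key, ?_⟩
  rw [key, div_eq_iff hA0]
  constructor <;> intro h <;> linarith
end

section
/- Let n ≥ 1, let u ∈ ℝⁿ, and let λ = (λ¹, λ², λ³) ∈ ℝ³. For x = (x¹, x², x³) ∈ (ℝⁿ)³ set sᵢ(x) = ⟨xⁱ, u⟩ − λⁱ for i = 1,2,3 and r(x) = (s₁(x)² + s₂(x)² + s₃(x)²)^{1/2}, and define F(x) = s₁(x)·ln(s₁(x) + r(x)) − r(x) on Ω = {x ∈ (ℝⁿ)³ : s₁(x) + r(x) > 0}. Then F is polyharmonic: for every a = (a¹,a²,a³) ∈ (ℝⁿ)³ and every v ∈ ℝⁿ, the function ξ = (ξ₁,ξ₂,ξ₃) ↦ F(a¹ + ξ₁v, a² + ξ₂v, a³ + ξ₃v) is harmonic (as a function of ξ ∈ ℝ³) on the open set of ξ where it is defined. -/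
open scoped BigOperators

/-- The Laplacian of `f : ℝ³ → ℝ` at a point, computed as the sum of the second
directional derivatives along the standard orthonormal basis. -/
noncomputable def laplacian3 (f : EuclideanSpace ℝ (Fin 3) → ℝ)
    (x : EuclideanSpace ℝ (Fin 3)) : ℝ :=
  ∑ i : Fin 3,
    fderiv ℝ (fun y => fderiv ℝ f y (EuclideanSpace.single i 1)) x (EuclideanSpace.single i 1)

/-- `f` is harmonic on `s`: it is `C²` there and its Laplacian vanishes on `s`. -/
def HarmonicOn3 (f : EuclideanSpace ℝ (Fin 3) → ℝ) (s : Set (EuclideanSpace ℝ (Fin 3))) : Prop :=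
  ContDiffOn ℝ 2 f s ∧ ∀ x ∈ s, laplacian3 f x = 0

/-!
Along the slice `ξ ↦ (aⁱ + ξᵢ v)ᵢ` the coordinates become affine, `sᵢ = bᵢ + c ξᵢ` with
`c = ⟨v, u⟩`, so the restriction of `F` is `G (b + c ξ)` for the function
`G t = t₀ log (t₀ + ‖t‖) - ‖t‖` on `ℝ³`. Precomposing with `ξ ↦ b + c ξ` multiplies the
Laplacian by `c²`, and `G` is harmonic: with `M = t₀ + ‖t‖` one has
`∇G = (log M, -t₁ / M, -t₂ / M)`, hence `ΔG = 1/‖t‖ - 2/M + (t₁² + t₂²)/(‖t‖ M²)`, which vanishes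
because `t₁² + t₂² = (‖t‖ - t₀) M`.
-/

open Filter Topology RealInnerProductSpace

local notation "ℝ³" => EuclideanSpace ℝ (Fin 3)

theorem hasFDerivAt_norm {E : Type*} [NormedAddCommGroup E] [InnerProductSpace ℝ E] {x : E}
    (hx : x ≠ 0) : HasFDerivAt (‖·‖) (‖x‖⁻¹ • innerSL ℝ x) x := by
  have h := (Real.hasDerivAt_sqrt (pow_ne_zero 2 (norm_ne_zero_iff.2 hx))).comp_hasFDerivAt x
    (hasStrictFDerivAt_norm_sq x).hasFDerivAt
  rw [Real.sqrt_sq (norm_nonneg x)] at h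
  refine (h.congr_fderiv ?_).congr_of_eventuallyEq
    (.of_forall fun y => (Real.sqrt_sq (norm_nonneg y)).symm)
  rw [← Nat.cast_smul_eq_nsmul ℝ, smul_smul]
  congr 1
  push_cast
  field_simp

theorem laplacian3_comp_add_smul {f : ℝ³ → ℝ} {b ξ : ℝ³} {c : ℝ}
    (hf : ContDiffAt ℝ 2 f (b + c • ξ)) :
    laplacian3 (fun y => f (b + c • y)) ξ = c ^ 2 * laplacian3 f (b + c • ξ) := by
  have hA : ∀ y : ℝ³, HasFDerivAt (fun y : ℝ³ => b + c • y) (c • ContinuousLinearMap.id ℝ ℝ³) y :=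
    fun y => ((hasFDerivAt_id y).const_smul c).const_add b
  have hdiff : ∀ᶠ y in 𝓝 ξ, DifferentiableAt ℝ f (b + c • y) :=
    (hA ξ).continuousAt.eventually
      ((hf.eventually (by simp)).mono fun z hz => hz.differentiableAt (by norm_num))
  rw [laplacian3, laplacian3, Finset.mul_sum]
  refine Finset.sum_congr rfl fun i _ => ?_
  set e : ℝ³ := EuclideanSpace.single i 1
  have hfirst : (fun y => fderiv ℝ (fun y => f (b + c • y)) y e)
      =ᶠ[𝓝 ξ] fun y => c * fderiv ℝ f (b + c • y) e := by
    filter_upwards [hdiff] with y hy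
    have hy' : HasFDerivAt (fun y => f (b + c • y)) _ y := hy.hasFDerivAt.comp y (hA y)
    rw [hy'.fderiv]
    simp
  have hsecond : DifferentiableAt ℝ (fun z => fderiv ℝ f z e) (b + c • ξ) :=
    ((hf.fderiv_right le_rfl).differentiableAt one_ne_zero).clm_apply (differentiableAt_const e)
  have hcomp : HasFDerivAt (fun y => c * fderiv ℝ f (b + c • y) e) _ ξ :=
    (hsecond.hasFDerivAt.comp ξ (hA ξ)).const_mul c
  rw [hfirst.fderiv_eq, hcomp.fderiv]
  simp only [ContinuousLinearMap.comp_smulₛₗ, Real.ringHom_apply, ContinuousLinearMap.comp_id,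
    smul_apply, smul_eq_mul]
  ring

theorem HarmonicOn3.comp_add_smul {f : ℝ³ → ℝ} {U : Set ℝ³} (hf : HarmonicOn3 f U)
    (hU : IsOpen U) (b : ℝ³) (c : ℝ) :
    HarmonicOn3 (fun ξ => f (b + c • ξ)) ((fun ξ => b + c • ξ) ⁻¹' U) := by
  have hA : ContDiff ℝ 2 fun ξ : ℝ³ => b + c • ξ := by fun_prop
  refine ⟨hf.1.comp hA.contDiffOn (Set.mapsTo_preimage _ _), fun ξ hξ => ?_⟩
  rw [laplacian3_comp_add_smul (hf.1.contDiffAt (hU.mem_nhds hξ)), hf.2 _ hξ, mul_zero]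

-- `t = (s₁, s₂, s₃)`, so that `‖t‖ = r`; `flatDomain` is `ℝ³` minus the half-line
-- `t₀ ≤ 0 = t₁ = t₂`.
noncomputable def flatPotential (t : ℝ³) : ℝ := t 0 * Real.log (t 0 + ‖t‖) - ‖t‖

def flatDomain : Set ℝ³ := {t | 0 < t 0 + ‖t‖}

theorem ne_zero_of_mem_flatDomain {t : ℝ³} (ht : t ∈ flatDomain) : t ≠ 0 := by
  rintro rfl
  simp [flatDomain] at ht

theorem isOpen_flatDomain : IsOpen flatDomain := isOpen_lt continuous_const (by fun_prop)

theorem contDiffOn_flatPotential : ContDiffOn ℝ 2 flatPotential flatDomain := fun t ht => by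
  have hnorm : ContDiffAt ℝ 2 (‖·‖) t := contDiffAt_norm ℝ (ne_zero_of_mem_flatDomain ht)
  have h0 : ContDiffAt ℝ 2 (fun t : ℝ³ => t 0) t := by fun_prop
  exact ((h0.mul ((Real.contDiffAt_log.2 ht.ne').comp t (h0.add hnorm))).sub
    hnorm).contDiffWithinAt

theorem hasFDerivAt_apply_zero_add_norm {t : ℝ³} (ht : t ≠ 0) :
    HasFDerivAt (fun y : ℝ³ => y 0 + ‖y‖) (EuclideanSpace.proj 0 + ‖t‖⁻¹ • innerSL ℝ t) t :=
  (EuclideanSpace.proj 0).hasFDerivAt.add (hasFDerivAt_norm ht)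

theorem fderiv_flatPotential_apply {t : ℝ³} (ht : t ∈ flatDomain) (w : ℝ³) :
    fderiv ℝ flatPotential t w =
      Real.log (t 0 + ‖t‖) * w 0 - (⟪t, w⟫ - t 0 * w 0) / (t 0 + ‖t‖) := by
  have hnorm := hasFDerivAt_norm (ne_zero_of_mem_flatDomain ht)
  have hlog := (Real.hasDerivAt_log ht.ne').comp_hasFDerivAt t
    (hasFDerivAt_apply_zero_add_norm (ne_zero_of_mem_flatDomain ht))
  have h : HasFDerivAt flatPotential _ t :=
    ((EuclideanSpace.proj 0).hasFDerivAt.mul hlog).sub hnorm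
  have hr := norm_ne_zero_iff.2 (ne_zero_of_mem_flatDomain ht)
  have hM : t 0 + ‖t‖ ≠ 0 := ht.ne'
  rw [h.fderiv]
  simp only [PiLp.proj_apply, smul_add, Function.comp_apply, sub_apply,
    add_apply, smul_apply, smul_eq_mul, coe_innerSL_apply]
  field_simp
  ring

theorem hasFDerivAt_inner_sub_mul_apply_zero (t w : ℝ³) :
    HasFDerivAt (fun y : ℝ³ => ⟪y, w⟫ - y 0 * w 0)
      (innerSL ℝ w - w 0 • EuclideanSpace.proj (𝕜 := ℝ) (0 : Fin 3)) t := by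
  have h1 : HasFDerivAt (fun y : ℝ³ => ⟪y, w⟫) (innerSL ℝ w) t :=
    (innerSL ℝ w).hasFDerivAt.congr_of_eventuallyEq (.of_forall fun y => real_inner_comm _ _)
  exact h1.sub ((EuclideanSpace.proj (𝕜 := ℝ) (0 : Fin 3)).hasFDerivAt.mul_const (w 0))

theorem fderiv_fderiv_flatPotential_apply {t : ℝ³} (ht : t ∈ flatDomain) (w : ℝ³) :
    fderiv ℝ (fun y => fderiv ℝ flatPotential y w) t w =
      ((w 0 + ⟪t, w⟫ / ‖t‖) * (w 0 + (⟪t, w⟫ - t 0 * w 0) / (t 0 + ‖t‖))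
        - (‖w‖ ^ 2 - w 0 ^ 2)) / (t 0 + ‖t‖) := by
  have hev : (fun y => fderiv ℝ flatPotential y w) =ᶠ[𝓝 t]
      fun y => Real.log (y 0 + ‖y‖) * w 0 - (⟪y, w⟫ - y 0 * w 0) * (y 0 + ‖y‖)⁻¹ := by
    filter_upwards [isOpen_flatDomain.mem_nhds ht] with y hy
    rw [fderiv_flatPotential_apply hy w, div_eq_mul_inv]
  have hM := hasFDerivAt_apply_zero_add_norm (ne_zero_of_mem_flatDomain ht)
  have h : HasFDerivAt
      (fun y => Real.log (y 0 + ‖y‖) * w 0 - (⟪y, w⟫ - y 0 * w 0) * (y 0 + ‖y‖)⁻¹) _ t :=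
    (((Real.hasDerivAt_log ht.ne').comp_hasFDerivAt t hM).mul_const (w 0)).sub
      ((hasFDerivAt_inner_sub_mul_apply_zero t w).mul
        ((hasDerivAt_inv ht.ne').comp_hasFDerivAt t hM))
  have hr := norm_ne_zero_iff.2 (ne_zero_of_mem_flatDomain ht)
  have hM0 : t 0 + ‖t‖ ≠ 0 := ht.ne'
  rw [hev.fderiv_eq, h.fderiv]
  simp only [smul_add, neg_smul, smul_neg, sub_apply,
    add_apply, smul_apply, PiLp.proj_apply, smul_eq_mul,
    coe_innerSL_apply, neg_apply, real_inner_self_eq_norm_sq]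
  field_simp
  ring

theorem laplacian3_flatPotential {t : ℝ³} (ht : t ∈ flatDomain) :
    laplacian3 flatPotential t = 0 := by
  have hr := norm_ne_zero_iff.2 (ne_zero_of_mem_flatDomain ht)
  have hM : t 0 + ‖t‖ ≠ 0 := ht.ne'
  have hsq : ‖t‖ ^ 2 = t 0 ^ 2 + t 1 ^ 2 + t 2 ^ 2 := by
    simp [EuclideanSpace.norm_sq_eq, Fin.sum_univ_three]
  simp only [laplacian3, fderiv_fderiv_flatPotential_apply ht, Fin.sum_univ_three,
    PiLp.single_apply, EuclideanSpace.inner_single_right, PiLp.norm_single, Real.ringHom_apply,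
    norm_one, one_pow, mul_one, mul_zero, mul_ite, sub_self, zero_div, add_zero, sub_zero,
    zero_add, ite_pow, ne_eq, OfNat.ofNat_ne_zero, not_false_eq_true, zero_pow, if_true,
    Fin.reduceEq, if_false, one_mul]
  field_simp
  linear_combination -hsq

theorem harmonicOn3_flatPotential : HarmonicOn3 flatPotential flatDomain :=
  ⟨contDiffOn_flatPotential, fun _ => laplacian3_flatPotential⟩

theorem flat_block_polyharmonic_general
    (n : ℕ) (u : EuclideanSpace ℝ (Fin n)) (lam : Fin 3 → ℝ)
    (s : Fin 3 → (Fin 3 → EuclideanSpace ℝ (Fin n)) → ℝ)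
    (hs : ∀ i x, s i x = (inner ℝ (x i) u : ℝ) - lam i)
    (r : (Fin 3 → EuclideanSpace ℝ (Fin n)) → ℝ)
    (hr : ∀ x, r x = Real.sqrt (∑ i : Fin 3, (s i x) ^ 2))
    (F : (Fin 3 → EuclideanSpace ℝ (Fin n)) → ℝ)
    (hF : ∀ x, F x = s 0 x * Real.log (s 0 x + r x) - r x)
    (a : Fin 3 → EuclideanSpace ℝ (Fin n)) (v : EuclideanSpace ℝ (Fin n)) :
    HarmonicOn3 (fun ξ : EuclideanSpace ℝ (Fin 3) => F (fun i => a i + ξ i • v))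
      {ξ : EuclideanSpace ℝ (Fin 3) |
        0 < s 0 (fun i => a i + ξ i • v) + r (fun i => a i + ξ i • v)} := by
  set b : ℝ³ := WithLp.toLp 2 fun i => ⟪a i, u⟫ - lam i
  set c : ℝ := ⟪v, u⟫
  have hs' : ∀ ξ : ℝ³, ∀ i, s i (fun i => a i + ξ i • v) = (b + c • ξ) i := fun ξ i => by
    simp only [hs, inner_add_left, real_inner_smul_left, PiLp.add_apply, PiLp.smul_apply,
      smul_eq_mul, b, c]
    ring
  have hr' : ∀ ξ : ℝ³, r (fun i => a i + ξ i • v) = ‖b + c • ξ‖ := fun ξ => by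
    simp [hr, hs', EuclideanSpace.norm_eq]
  have hF' : (fun ξ : ℝ³ => F (fun i => a i + ξ i • v)) = fun ξ => flatPotential (b + c • ξ) := by
    funext ξ
    rw [hF, hr', hs', flatPotential]
  have hdom : {ξ : ℝ³ | 0 < s 0 (fun i => a i + ξ i • v) + r (fun i => a i + ξ i • v)} =
      (fun ξ => b + c • ξ) ⁻¹' flatDomain := by
    ext ξ
    simp [flatDomain, hr', hs']
  rw [hF', hdom]
  exact harmonicOn3_flatPotential.comp_add_smul isOpen_flatDomain b c

/-- The building block `F = s₁ ln(s₁+r) − r` of the potential (33) associated to a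
codimension-3 flat `Hₖ` in `ℝ³⊗ℝⁿ ≅ (ℝⁿ)³` is polyharmonic: its restriction to any
affine subspace `a + ℝ³⊗ℝv` is harmonic where defined. -/
theorem flat_block_polyharmonic
    (n : ℕ) (hn : 1 ≤ n) (u : EuclideanSpace ℝ (Fin n)) (lam : Fin 3 → ℝ)
    (s : Fin 3 → (Fin 3 → EuclideanSpace ℝ (Fin n)) → ℝ)
    (hs : ∀ i x, s i x = (inner ℝ (x i) u : ℝ) - lam i)
    (r : (Fin 3 → EuclideanSpace ℝ (Fin n)) → ℝ)
    (hr : ∀ x, r x = Real.sqrt (∑ i : Fin 3, (s i x) ^ 2))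
    (F : (Fin 3 → EuclideanSpace ℝ (Fin n)) → ℝ)
    (hF : ∀ x, F x = s 0 x * Real.log (s 0 x + r x) - r x)
    (a : Fin 3 → EuclideanSpace ℝ (Fin n)) (v : EuclideanSpace ℝ (Fin n)) :
    HarmonicOn3 (fun ξ : EuclideanSpace ℝ (Fin 3) => F (fun i => a i + ξ i • v))
      {ξ : EuclideanSpace ℝ (Fin 3) |
        0 < s 0 (fun i => a i + ξ i • v) + r (fun i => a i + ξ i • v)} :=
  flat_block_polyharmonic_general n u lam s hs r hr F hF a v
end
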